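/- Let X ⊆ 2^ω be null-additive and let T be a tree with μ(Lim T) > 0. Then there is a tree T* with μ(Lim T*) > 0, with μ(Lim(T*^{[η]})) > 0 for every η ∈ T*, such that ((2^ω \ (Lim T)^{fin}) + X) ∩ Lim T* = ∅, and moreover X = ⋃ Y_{η,ζ} where the union is over η ∈ T* and ζ with length ζ = length η, and Y_{η,ζ} = {x ∈ X : ζ⌢x^{⟨length ζ⟩} + T*^{[η]} ⊆ T} (here x^{⟨k⟩} is the shift of x by k and addition of finite with infinite sequences is truncated componentwise mod 2). -/

import Mathlib

open MeasureTheory Pointwise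

/-- Cantor space `2^ω` with componentwise addition mod 2. -/
abbrev Cantor : Type := ℕ → ZMod 2
/-- Finite binary sequences, the nodes of `2^{<ω}`. -/
abbrev FinSeq : Type := List (ZMod 2)

instance : TopologicalSpace (ZMod 2) := ⊥
instance : DiscreteTopology (ZMod 2) := ⟨rfl⟩
noncomputable instance : MeasurableSpace Cantor := borel Cantor
instance : BorelSpace Cantor := ⟨rfl⟩

/-- The uniform (Lebesgue) product measure on `2^ω`, realized as the Haar measure of the
compact group `2^ω` normalized so that the whole space has measure 1. -/
noncomputable def μC : Measure Cantor := Measure.addHaarMeasure ⊤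

/-- `X` is null-additive: `X + A` is null for every null `A`. -/
def NullAdditive (X : Set Cantor) : Prop := ∀ A : Set Cantor, μC A = 0 → μC (X + A) = 0

/-- `X` is meager-additive: `X + A` is meager for every meager `A`. -/
def MeagerAdditive (X : Set Cantor) : Prop := ∀ A : Set Cantor, IsMeagre A → IsMeagre (X + A)

/-- A tree on `2^{<ω}`: nonempty, closed under initial segments, and every node has
extensions in the tree of every greater length. -/
def IsTree (T : Set FinSeq) : Prop :=
  T.Nonempty ∧ (∀ σ τ : FinSeq, σ <+: τ → τ ∈ T → σ ∈ T) ∧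
    ∀ σ ∈ T, ∀ n, σ.length < n → ∃ τ ∈ T, σ <+: τ ∧ τ.length = n

/-- Restriction `x↾n` of `x ∈ 2^ω`. -/
def res (x : Cantor) (n : ℕ) : FinSeq := (List.range n).map x

/-- `Lim T = {x ∈ 2^ω : ∀ n, x↾n ∈ T}`. -/
def LimT (T : Set FinSeq) : Set Cantor := {x | ∀ n, res x n ∈ T}

/-- A nowhere dense tree: every node has an extension outside the tree. -/
def NwdTree (T : Set FinSeq) : Prop := ∀ η ∈ T, ∃ τ : FinSeq, η <+: τ ∧ τ ∉ T

/-- Componentwise mod-2 addition of finite sequences (of the same length). -/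
def finAdd : FinSeq → FinSeq → FinSeq := List.zipWith (· + ·)

/-- `T + S = {η + σ : η ∈ T, σ ∈ S, same length}`. -/
def treeSum (T S : Set FinSeq) : Set FinSeq :=
  {ρ | ∃ η ∈ T, ∃ σ ∈ S, η.length = σ.length ∧ ρ = finAdd η σ}

/-- `T^{[η]} = {τ ∈ T : τ ⊑ η or η ⊑ τ}`. -/
def through (T : Set FinSeq) (η : FinSeq) : Set FinSeq := {τ ∈ T | τ <+: η ∨ η <+: τ}

/-- `A^{fin}`: points agreeing with some point of `A` at all but finitely many coordinates. -/
def finEq (A : Set Cantor) : Set Cantor := {y | ∃ x ∈ A, ∀ᶠ n in Filter.atTop, y n = x n}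

/-- `U^{⟨ν⟩} = {τ : ν⌢τ ∈ U}`. -/
def above (U : Set FinSeq) (ν : FinSeq) : Set FinSeq := {τ | ν ++ τ ∈ U}

/-- A corset: a nondecreasing function `ω → ω \ {0}` tending to infinity. -/
def Corset (f : ℕ → ℕ) : Prop :=
  Monotone f ∧ (∀ n, 0 < f n) ∧ Filter.Tendsto f Filter.atTop Filter.atTop

/-- `S` is of width `f`: `|S ∩ 2^n| ≤ f n` for all `n`. -/
def widthLe (S : Set FinSeq) (f : ℕ → ℕ) : Prop := ∀ n, {τ ∈ S | τ.length = n}.ncard ≤ f n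

/-- `S` is almost of width `f`: `|S ∩ 2^n| ≤ f n` for all sufficiently large `n`. -/
def almostWidthLe (S : Set FinSeq) (f : ℕ → ℕ) : Prop :=
  ∀ᶠ n in Filter.atTop, {τ ∈ S | τ.length = n}.ncard ≤ f n

/-- The infinite sequence `ζ⌢x^{⟨length ζ⟩}`: `ζ` followed by the tail of `x`
shifted by `length ζ`, i.e. `i ↦ ζ i` for `i < length ζ` and `i ↦ x i` otherwise. -/
def catShift (ζ : FinSeq) (x : Cantor) : Cantor :=
  fun i => if h : i < ζ.length then ζ.get ⟨i, h⟩ else x i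

/-!
Since `Lim T` has positive measure, the zero-one law for sets invariant under finite
modifications gives `μ ((Lim T)^{fin}) = 1`, so `M = 2^ω \ (Lim T)^{fin}` is null and, by
null-additivity, so is `X + M`. Take a closed `K` of positive measure disjoint from a null Borel
hull of `X + M`, and let `T*` be the tree of nodes whose cylinders meet `K` in positive measure;
then `Lim T*` misses `M + X`. Hence for `x ∈ X` the closed set `Lim T*` is covered by the
countably many closed sets `{y | y + x' ∈ Lim T}`, `x'` a finite modification of `x`, and by the
Baire category theorem one of them contains `Lim T* ∩ [η]` for some `η ∈ T*`; this puts `x` into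
some `Y_{η,ζ}`.
-/

open Filter Set TopologicalSpace Topology

instance : μC.IsAddLeftInvariant := by unfold μC; infer_instance

instance : μC.Regular := by unfold μC; infer_instance

instance : IsProbabilityMeasure μC :=
  ⟨by simpa [μC] using
    Measure.addHaarMeasure_self (K₀ := (⊤ : PositiveCompacts Cantor))⟩

def cyl (σ : FinSeq) : Set Cantor := {x | res x σ.length = σ}

@[simp] lemma length_res (x : Cantor) (n : ℕ) : (res x n).length = n := by simp [res]

lemma res_eq_res_iff {x y : Cantor} {n : ℕ} : res x n = res y n ↔ ∀ i < n, x i = y i := by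
  simp [res, List.map_inj_left]

lemma take_res (x : Cantor) {m n : ℕ} (h : m ≤ n) : (res x n).take m = res x m := by
  simp [res, ← List.map_take, List.take_range, h]

lemma res_prefix_res (x : Cantor) {m n : ℕ} (h : m ≤ n) : res x m <+: res x n :=
  take_res x h ▸ List.take_prefix _ _

lemma res_succ (x : Cantor) (n : ℕ) : res x (n + 1) = res x n ++ [x n] := by
  simp [res, List.range_succ]

lemma res_add (x y : Cantor) (n : ℕ) : res (x + y) n = finAdd (res x n) (res y n) := by
  simp [res, finAdd, List.zipWith_map]

lemma mem_cyl_res {x y : Cantor} {n : ℕ} : x ∈ cyl (res y n) ↔ res x n = res y n := by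
  simp [cyl]

lemma self_mem_cyl_res (x : Cantor) (n : ℕ) : x ∈ cyl (res x n) := mem_cyl_res.2 rfl

lemma cyl_nil : cyl [] = univ := by ext x; simp [cyl, res]

lemma cyl_subset_cyl {σ τ : FinSeq} (h : σ <+: τ) : cyl τ ⊆ cyl σ := fun x (hx : _ = τ) => by
  show res x σ.length = σ
  rw [← take_res x h.length_le, hx, ← List.prefix_iff_eq_take.1 h]

lemma prefix_of_mem_cyl {σ τ : FinSeq} {x : Cantor} (hσ : x ∈ cyl σ) (hτ : x ∈ cyl τ)
    (h : σ.length ≤ τ.length) : σ <+: τ :=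
  hσ ▸ hτ ▸ res_prefix_res x h

lemma mem_cyl_append_singleton {σ : FinSeq} {a : ZMod 2} {x : Cantor} :
    x ∈ cyl (σ ++ [a]) ↔ x ∈ cyl σ ∧ x σ.length = a := by
  simp [cyl, res_succ]

lemma cyl_res_eq_cylinder (x : Cantor) (n : ℕ) : cyl (res x n) = PiNat.cylinder x n := by
  ext y; simp [mem_cyl_res, res_eq_res_iff, PiNat.cylinder]

lemma isOpen_setOf_res_mem (S : Set FinSeq) (n : ℕ) : IsOpen {x : Cantor | res x n ∈ S} :=
  isOpen_iff_forall_mem_open.2 fun x hx =>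
    ⟨cyl (res x n), fun y hy => show res y n ∈ S by rwa [mem_cyl_res.1 hy],
      cyl_res_eq_cylinder x n ▸ PiNat.isOpen_cylinder _ x n, self_mem_cyl_res x n⟩

lemma isClopen_setOf_res_mem (S : Set FinSeq) (n : ℕ) : IsClopen {x : Cantor | res x n ∈ S} :=
  ⟨isOpen_compl_iff.1 (isOpen_setOf_res_mem Sᶜ n), isOpen_setOf_res_mem S n⟩

lemma isClopen_cyl (σ : FinSeq) : IsClopen (cyl σ) := isClopen_setOf_res_mem {σ} σ.length

lemma measurableSet_cyl (σ : FinSeq) : MeasurableSet (cyl σ) :=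
  (isClopen_cyl σ).isOpen.measurableSet

lemma exists_cyl_res_subset_of_mem_nhds {U : Set Cantor} {y : Cantor} (hU : U ∈ 𝓝 y) :
    ∃ n, cyl (res y n) ⊆ U := by
  obtain ⟨_, ⟨z, n, rfl⟩, hy, hsub⟩ :=
    (PiNat.isTopologicalBasis_cylinders _).mem_nhds_iff.1 hU
  exact ⟨n, by rwa [cyl_res_eq_cylinder, PiNat.mem_cylinder_iff_eq.1 hy]⟩

lemma isTopologicalBasis_cyl : IsTopologicalBasis (range cyl) :=
  isTopologicalBasis_of_isOpen_of_nhds (by rintro _ ⟨σ, rfl⟩; exact (isClopen_cyl σ).isOpen)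
    fun y U hy hU => by
      obtain ⟨n, hn⟩ := exists_cyl_res_subset_of_mem_nhds (hU.mem_nhds hy)
      exact ⟨_, mem_range_self _, self_mem_cyl_res y n, hn⟩

lemma borel_eq_generateFrom_cyl : borel Cantor = MeasurableSpace.generateFrom (range cyl) :=
  have := isTopologicalBasis_cyl.secondCountableTopology (countable_range cyl)
  isTopologicalBasis_cyl.borel_eq_generateFrom

lemma isPiSystem_cyl : IsPiSystem (range cyl) := by
  rintro _ ⟨σ, rfl⟩ _ ⟨τ, rfl⟩ ⟨x, hσ, hτ⟩
  rcases le_total σ.length τ.length with h | h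
  · exact ⟨τ, (inter_eq_right.2 (cyl_subset_cyl (prefix_of_mem_cyl hσ hτ h))).symm⟩
  · exact ⟨σ, (inter_eq_left.2 (cyl_subset_cyl (prefix_of_mem_cyl hτ hσ h))).symm⟩

section ZeroOne

variable {F : Set Cantor}

lemma single_add_mem_cyl_append_zero_iff (σ : FinSeq) (x : Cantor) :
    Pi.single σ.length 1 + x ∈ cyl (σ ++ [0]) ↔ x ∈ cyl (σ ++ [1]) := by
  have hres : res (Pi.single σ.length 1 + x) σ.length = res x σ.length :=
    res_eq_res_iff.2 fun i hi => by simp [hi.ne]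
  have hflip : ∀ a : ZMod 2, 1 + a = 0 ↔ a = 1 := by decide
  rw [mem_cyl_append_singleton, mem_cyl_append_singleton, cyl, mem_ofPred_eq, mem_ofPred_eq,
    hres, Pi.add_apply, Pi.single_eq_same, hflip]

lemma two_mul_measure_inter_cyl_append (hFm : MeasurableSet F)
    (hF : ∀ n, (Pi.single n 1 + ·) ⁻¹' F = F) (σ : FinSeq) (a : ZMod 2) :
    2 * μC (F ∩ cyl (σ ++ [a])) = μC (F ∩ cyl σ) := by
  have hflip : μC (F ∩ cyl (σ ++ [0])) = μC (F ∩ cyl (σ ++ [1])) := by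
    rw [← measure_preimage_add μC (Pi.single σ.length 1), preimage_inter, hF]
    congr 2
    ext x
    exact single_add_mem_cyl_append_zero_iff σ x
  have hsplit : F ∩ cyl σ = F ∩ cyl (σ ++ [0]) ∪ F ∩ cyl (σ ++ [1]) := by
    ext x
    have hbit : ∀ a : ZMod 2, a = 0 ∨ a = 1 := by decide
    rcases hbit (x σ.length) with h | h <;> simp [mem_cyl_append_singleton, h]
  have hdisj : Disjoint (F ∩ cyl (σ ++ [0])) (F ∩ cyl (σ ++ [1])) := by
    refine disjoint_left.2 fun x h0 h1 => ?_
    simp only [mem_inter_iff, mem_cyl_append_singleton] at h0 h1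
    exact zero_ne_one (h0.2.2.symm.trans h1.2.2)
  rw [hsplit, measure_union hdisj (hFm.inter (measurableSet_cyl _)), ← hflip, ← two_mul]
  fin_cases a
  · rfl
  · exact congrArg _ hflip.symm

lemma measure_inter_cyl (hFm : MeasurableSet F) (hF : ∀ n, (Pi.single n 1 + ·) ⁻¹' F = F)
    (σ : FinSeq) : μC (F ∩ cyl σ) = μC F * μC (cyl σ) := by
  induction σ using List.reverseRecOn with
  | nil => simp [cyl_nil]
  | append_singleton σ a ih =>
    have hcyl := two_mul_measure_inter_cyl_append MeasurableSet.univ (by simp) σ a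
    simp only [univ_inter] at hcyl
    refine (ENNReal.mul_right_inj two_ne_zero ENNReal.ofNat_ne_top).1 ?_
    rw [two_mul_measure_inter_cyl_append hFm hF, ih, ← hcyl, mul_left_comm]

/-- A zero-one law: a set invariant under flipping single coordinates meets every cylinder in
proportion to its measure, hence is independent of itself. -/
theorem measure_eq_zero_or_one_of_preimage_single_add (hFm : MeasurableSet F)
    (hF : ∀ n, (Pi.single n 1 + ·) ⁻¹' F = F) : μC F = 0 ∨ μC F = 1 := by
  have hrestrict : μC.restrict F = μC F • μC :=
    ext_of_generate_finite _ borel_eq_generateFrom_cyl isPiSystem_cyl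
      (by
        rintro _ ⟨σ, rfl⟩
        simp [Measure.restrict_apply (measurableSet_cyl σ), inter_comm,
          measure_inter_cyl hFm hF])
      (by simp)
  have hsq : μC F * 1 = μC F * μC F := by simpa [hFm] using congrArg (· F) hrestrict
  rcases eq_or_ne (μC F) 0 with h | h
  · exact .inl h
  · exact .inr ((ENNReal.mul_right_inj h (measure_ne_top _ _)).1 hsq).symm

end ZeroOne

section FinEq

lemma catShift_eventuallyEq (ζ : FinSeq) (x : Cantor) : catShift ζ x =ᶠ[atTop] x :=
  eventually_atTop.2 ⟨ζ.length, fun _ hi => dif_neg hi.not_gt⟩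

lemma exists_catShift_eq_of_eventuallyEq {z x : Cantor} (h : z =ᶠ[atTop] x) :
    ∃ ζ, catShift ζ x = z := by
  obtain ⟨n, hn⟩ := eventually_atTop.1 h
  refine ⟨res z n, funext fun i => ?_⟩
  by_cases hi : i < n
  · simp [catShift, res, hi]
  · simp [catShift, hi, hn i (not_lt.1 hi)]

lemma catShift_res_catShift {ζ : FinSeq} {m : ℕ} (h : ζ.length ≤ m) (x : Cantor) :
    catShift (res (catShift ζ x) m) x = catShift ζ x := by
  funext i
  by_cases hi : i < m
  · simp [catShift, res, hi]
  · simp [catShift, hi, (h.trans (not_lt.1 hi)).not_gt]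

lemma continuous_catShift (ζ : FinSeq) : Continuous (catShift ζ) :=
  continuous_pi fun i => by
    unfold catShift
    split_ifs
    exacts [continuous_const, continuous_apply i]

lemma mem_finEq_iff {A : Set Cantor} {u : Cantor} : u ∈ finEq A ↔ ∃ ζ, catShift ζ u ∈ A := by
  constructor
  · rintro ⟨a, ha, hua⟩
    obtain ⟨ζ, rfl⟩ := exists_catShift_eq_of_eventuallyEq (show u =ᶠ[atTop] a from hua).symm
    exact ⟨ζ, ha⟩
  · rintro ⟨ζ, hζ⟩
    exact ⟨_, hζ, (catShift_eventuallyEq ζ u).symm⟩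

lemma subset_finEq (A : Set Cantor) : A ⊆ finEq A := fun a ha => ⟨a, ha, EventuallyEq.rfl⟩

lemma measurableSet_finEq {A : Set Cantor} (hA : MeasurableSet A) :
    MeasurableSet (finEq A) := by
  have : finEq A = ⋃ ζ, catShift ζ ⁻¹' A := by ext u; simp [mem_finEq_iff]
  rw [this]
  exact .iUnion fun ζ => (continuous_catShift ζ).measurable hA

lemma preimage_single_add_finEq (A : Set Cantor) (n : ℕ) :
    (Pi.single n 1 + ·) ⁻¹' finEq A = finEq A := by
  have hflip : ∀ u : Cantor, Pi.single n 1 + u =ᶠ[atTop] u := fun u =>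
    eventually_atTop.2 ⟨n + 1, fun i hi => by simp [Pi.single_eq_of_ne (by omega : i ≠ n)]⟩
  ext u
  exact ⟨fun ⟨a, ha, h⟩ => ⟨a, ha, (hflip u).symm.trans h⟩,
    fun ⟨a, ha, h⟩ => ⟨a, ha, (hflip u).trans h⟩⟩

lemma measure_finEq_eq_one {A : Set Cantor} (hA : MeasurableSet A) (hpos : 0 < μC A) :
    μC (finEq A) = 1 :=
  (measure_eq_zero_or_one_of_preimage_single_add (measurableSet_finEq hA)
    (preimage_single_add_finEq A)).resolve_left
      (hpos.trans_le (measure_mono (subset_finEq A))).ne'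

end FinEq

section Trees

lemma isClosed_limT (S : Set FinSeq) : IsClosed (LimT S) := by
  have : LimT S = ⋂ n, {x | res x n ∈ S} := by ext x; simp [LimT]
  rw [this]
  exact isClosed_iInter fun n => (isClopen_setOf_res_mem S n).isClosed

lemma limT_through (S : Set FinSeq) (η : FinSeq) : LimT (through S η) = LimT S ∩ cyl η := by
  ext x
  constructor
  · intro hx
    refine ⟨fun n => (hx n).1, ?_⟩
    rcases (hx η.length).2 with h | h
    · exact h.eq_of_length (length_res x η.length)
    · exact (h.eq_of_length (length_res x η.length).symm).symm
  · rintro ⟨hx, hη : res x η.length = η⟩ n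
    refine ⟨hx n, ?_⟩
    rcases le_total n η.length with h | h
    · exact .inl (hη ▸ res_prefix_res x h)
    · exact .inr (hη ▸ res_prefix_res x h)

def positiveTree (K : Set Cantor) : Set FinSeq := {σ | 0 < μC (K ∩ cyl σ)}

variable {K : Set Cantor}

lemma limT_positiveTree_subset (hK : IsClosed K) : LimT (positiveTree K) ⊆ K := by
  intro x hx
  by_contra hxK
  obtain ⟨n, hn⟩ := exists_cyl_res_subset_of_mem_nhds (hK.isOpen_compl.mem_nhds hxK)
  have hempty : K ∩ cyl (res x n) = ∅ :=
    disjoint_iff_inter_eq_empty.1 (disjoint_compl_right.mono_right hn)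
  exact (hx n).ne' (hempty ▸ measure_empty)

lemma limT_positiveTree_ae_eq (hK : IsClosed K) : LimT (positiveTree K) =ᵐ[μC] K := by
  have hnull : μC (K \ LimT (positiveTree K)) = 0 := by
    refine measure_mono_null (t := ⋃ σ ∈ (positiveTree K)ᶜ, K ∩ cyl σ) ?_
      ((measure_biUnion_null_iff (to_countable _)).2 fun _ hσ =>
        nonpos_iff_eq_zero.1 (not_lt.1 hσ))
    rintro x ⟨hxK, hx⟩
    obtain ⟨n, hn⟩ : ∃ n, res x n ∉ positiveTree K := by simpa [LimT] using hx
    exact mem_biUnion hn ⟨hxK, self_mem_cyl_res x n⟩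
  refine ae_eq_set.2 ⟨?_, hnull⟩
  rw [sdiff_eq_empty.2 (limT_positiveTree_subset hK), measure_empty]

lemma measure_limT_positiveTree_inter_cyl_pos (hK : IsClosed K) {σ : FinSeq}
    (hσ : σ ∈ positiveTree K) : 0 < μC (LimT (positiveTree K) ∩ cyl σ) :=
  (measure_congr ((limT_positiveTree_ae_eq hK).inter EventuallyEq.rfl)).symm ▸ hσ

lemma isTree_positiveTree (hK : IsClosed K) (hpos : 0 < μC K) : IsTree (positiveTree K) := by
  refine ⟨⟨[], by simpa [positiveTree, cyl_nil] using hpos⟩, fun σ τ h hτ => ?_,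
    fun σ hσ n hn => ?_⟩
  · exact hτ.trans_le (measure_mono (inter_subset_inter_right K (cyl_subset_cyl h)))
  · obtain ⟨x, hx, hxσ⟩ :=
      nonempty_of_measure_ne_zero (measure_limT_positiveTree_inter_cyl_pos hK hσ).ne'
    exact ⟨res x n, hx n, prefix_of_mem_cyl hxσ (self_mem_cyl_res x n) (by simpa using hn.le),
      length_res x n⟩

end Trees

section Cover

lemma exists_inter_cyl_subset_of_subset_iUnion {ι : Type*} [Countable ι] {C : Set Cantor}
    (hC : IsClosed C) (hne : C.Nonempty) {F : ι → Set Cantor} (hF : ∀ i, IsClosed (F i))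
    (hcov : C ⊆ ⋃ i, F i) : ∃ i, ∃ y ∈ C, ∃ n, C ∩ cyl (res y n) ⊆ F i := by
  have : CompactSpace C := isCompact_iff_compactSpace.1 hC.isCompact
  have : Nonempty C := hne.to_subtype
  obtain ⟨i, ⟨y, hy⟩, hyint⟩ := nonempty_interior_of_iUnion_of_closed
    (f := fun i => ((↑) : C → Cantor) ⁻¹' F i) (fun i => (hF i).preimage continuous_subtype_val)
    (by ext ⟨x, hx⟩; simpa using hcov hx)
  obtain ⟨U, hU, hUF⟩ := (mem_nhds_subtype C _ _).1 (mem_interior_iff_mem_nhds.1 hyint)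
  obtain ⟨n, hn⟩ := exists_cyl_res_subset_of_mem_nhds hU
  exact ⟨i, y, hy, n, fun x ⟨hxC, hx⟩ =>
    hUF (show (⟨x, hxC⟩ : C) ∈ Subtype.val ⁻¹' U from hn hx)⟩

/-- Baire category: `C` is covered by the countably many closed sets
`{y | y + catShift ζ x ∈ E}`. -/
lemma exists_forall_add_catShift_mem {C E : Set Cantor} (hC : IsClosed C) (hne : C.Nonempty)
    (hE : IsClosed E) {x : Cantor} (hx : ∀ y ∈ C, y + x ∈ finEq E) :
    ∃ y₀ ∈ C, ∃ ζ : FinSeq, ∀ y ∈ C ∩ cyl (res y₀ ζ.length), y + catShift ζ x ∈ E := by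
  have hcov : C ⊆ ⋃ ζ : FinSeq, {y | y + catShift ζ x ∈ E} := by
    intro y hy
    obtain ⟨e, he, hye⟩ := hx y hy
    obtain ⟨ζ, hζ⟩ := exists_catShift_eq_of_eventuallyEq (z := y + e) (x := x)
      (hye.mono fun n h => by simp [← h, ← add_assoc, CharTwo.add_self_eq_zero])
    exact mem_iUnion.2 ⟨ζ, by simpa [hζ, ← add_assoc, CharTwo.add_self_eq_zero] using he⟩
  obtain ⟨ζ, y₀, hy₀, n, hn⟩ := exists_inter_cyl_subset_of_subset_iUnion hC hne
    (fun ζ => hE.preimage (continuous_add_const _)) hcov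
  refine ⟨y₀, hy₀, res (catShift ζ x) (max n ζ.length), fun y ⟨hyC, hy⟩ => ?_⟩
  rw [catShift_res_catShift (le_max_right _ _)]
  rw [length_res] at hy
  exact hn ⟨hyC, cyl_subset_cyl (res_prefix_res y₀ (le_max_left _ _)) hy⟩

lemma exists_mem_forall_through_finAdd_mem {S T : Set FinSeq} (hS : (LimT S).Nonempty)
    (hthrough : ∀ η ∈ S, (LimT (through S η)).Nonempty) {x : Cantor}
    (hx : ∀ y ∈ LimT S, y + x ∈ finEq (LimT T)) :
    ∃ η ∈ S, ∃ ζ : FinSeq, ζ.length = η.length ∧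
      ∀ τ ∈ through S η, finAdd (res (catShift ζ x) τ.length) τ ∈ T := by
  obtain ⟨y₀, hy₀, ζ, hζ⟩ :=
    exists_forall_add_catShift_mem (isClosed_limT S) hS (isClosed_limT T) hx
  refine ⟨res y₀ ζ.length, hy₀ _, ζ, (length_res _ _).symm, fun τ ⟨hτS, hτ⟩ => ?_⟩
  obtain ⟨y, hyS, hyη, hyτ⟩ : ∃ y ∈ LimT S, y ∈ cyl (res y₀ ζ.length) ∧ y ∈ cyl τ := by
    rcases hτ with h | h
    · obtain ⟨y, hyS, hy⟩ := limT_through S _ ▸ hthrough _ (hy₀ _)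
      exact ⟨y, hyS, hy, cyl_subset_cyl h hy⟩
    · obtain ⟨y, hyS, hy⟩ := limT_through S _ ▸ hthrough τ hτS
      exact ⟨y, hyS, cyl_subset_cyl h hy, hy⟩
  have := hζ y ⟨hyS, hyη⟩ τ.length
  rwa [add_comm, res_add, (hyτ : res y τ.length = τ)] at this

end Cover

theorem stmt5_general (X : Set Cantor) (hX : NullAdditive X)
    (T : Set FinSeq) (hμ : 0 < μC (LimT T)) :
    ∃ Tstar : Set FinSeq, IsTree Tstar ∧ 0 < μC (LimT Tstar) ∧
      (∀ η ∈ Tstar, 0 < μC (LimT (through Tstar η))) ∧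
      ((Set.univ \ finEq (LimT T)) + X) ∩ LimT Tstar = ∅ ∧
      X = ⋃ (η : FinSeq) (_ : η ∈ Tstar) (ζ : FinSeq) (_ : ζ.length = η.length),
            {x ∈ X | ∀ τ ∈ through Tstar η,
              finAdd (res (catShift ζ x) τ.length) τ ∈ T} := by
  have hE := (isClosed_limT T).measurableSet
  have hM : μC (univ \ finEq (LimT T)) = 0 := by
    rw [← compl_eq_univ_sdiff, prob_compl_eq_zero_iff (measurableSet_finEq hE)]
    exact measure_finEq_eq_one hE hμ
  obtain ⟨N, hXMN, hNm, hN⟩ := exists_measurable_superset_of_null (hX _ hM)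
  obtain ⟨K, hKN, hKc, hK⟩ := hNm.compl.exists_lt_isCompact_of_ne_top (measure_ne_top _ _)
    (((prob_compl_eq_one_iff hNm).2 hN).symm ▸ zero_lt_one)
  have hLimN : LimT (positiveTree K) ⊆ Nᶜ := (limT_positiveTree_subset hKc.isClosed).trans hKN
  have hlim : 0 < μC (LimT (positiveTree K)) :=
    (measure_congr (limT_positiveTree_ae_eq hKc.isClosed)).symm ▸ hK
  have hthrough : ∀ η ∈ positiveTree K, 0 < μC (LimT (through (positiveTree K) η)) :=
    fun η hη => limT_through _ η ▸ measure_limT_positiveTree_inter_cyl_pos hKc.isClosed hη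
  refine ⟨positiveTree K, isTree_positiveTree hKc.isClosed hK, hlim, hthrough, ?_, ?_⟩
  · refine eq_empty_of_forall_notMem fun y ⟨hy, hyT⟩ => hLimN hyT (hXMN ?_)
    rwa [add_comm] at hy
  · refine subset_antisymm (fun x hx => ?_)
      (iUnion₂_subset fun _ _ => iUnion₂_subset fun _ _ => sep_subset _ _)
    have hfin : ∀ y ∈ LimT (positiveTree K), y + x ∈ finEq (LimT T) := fun y hy => by
      by_contra hyx
      refine hLimN hy (hXMN ⟨x, hx, y + x, ⟨trivial, hyx⟩, ?_⟩)
      simp [add_left_comm x, CharTwo.add_self_eq_zero]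
    obtain ⟨η, hη, ζ, hζ, hT⟩ := exists_mem_forall_through_finAdd_mem
      (nonempty_of_measure_ne_zero hlim.ne')
      (fun η hη => nonempty_of_measure_ne_zero (hthrough η hη).ne') hfin
    exact mem_iUnion₂.2 ⟨η, hη, mem_iUnion₂.2 ⟨ζ, hζ, hx, hT⟩⟩

/-- Lemma 9. -/
theorem stmt5 (X : Set Cantor) (hX : NullAdditive X)
    (T : Set FinSeq) (hT : IsTree T) (hμ : 0 < μC (LimT T)) :
    ∃ Tstar : Set FinSeq, IsTree Tstar ∧ 0 < μC (LimT Tstar) ∧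
      (∀ η ∈ Tstar, 0 < μC (LimT (through Tstar η))) ∧
      ((Set.univ \ finEq (LimT T)) + X) ∩ LimT Tstar = ∅ ∧
      X = ⋃ (η : FinSeq) (_ : η ∈ Tstar) (ζ : FinSeq) (_ : ζ.length = η.length),
            {x ∈ X | ∀ τ ∈ through Tstar η,
              finAdd (res (catShift ζ x) τ.length) τ ∈ T} :=
  stmt5_general X hX T hμ
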